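/- Let ν > 0, c > 4ν, and let A ∈ ℝ satisfy A² = 2ν(c − 4ν). Define u(x) = A·sech(√ν x) and w(x) = 2ν·sech²(√ν x). Then u and w solve the steady long-wave–short-wave resonance equations: −2u''(x) − 2u(x)w(x) + 2ν u(x) = 0 and −w''(x) + c·w(x) − 3 w(x)² − u(x)² = 0, for all x ∈ ℝ. -/

import Mathlib

noncomputable def uLW (ν A x : ℝ) : ℝ := A * (1 / Real.cosh (Real.sqrt ν * x))
noncomputable def wLW (ν x : ℝ) : ℝ := 2 * ν * (1 / Real.cosh (Real.sqrt ν * x)) ^ 2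

private lemma coshne (y : ℝ) : Real.cosh y ≠ 0 := (Real.cosh_pos y).ne'

private lemma hsx (s x : ℝ) : HasDerivAt (fun x => s * x) s x := by
  simpa using (hasDerivAt_id x).const_mul s

private lemma hu1 (A s x : ℝ) :
    HasDerivAt (fun x => A * (1 / Real.cosh (s * x)))
      (-(A * s) * (Real.sinh (s * x) / Real.cosh (s * x) ^ 2)) x := by
  have h := (((hsx s x).cosh).inv (coshne _)).const_mul A
  refine HasDerivAt.congr_deriv (by simpa [one_div] using h) (by ring)

private lemma hu2 (A s x : ℝ) :
    HasDerivAt (fun x => -(A * s) * (Real.sinh (s * x) / Real.cosh (s * x) ^ 2))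
      (-(A * s) * ((Real.cosh (s * x) * s * Real.cosh (s * x) ^ 2
          - Real.sinh (s * x) * (2 * Real.cosh (s * x) * (Real.sinh (s * x) * s)))
        / (Real.cosh (s * x) ^ 2) ^ 2)) x := by
  have h := (((hsx s x).sinh).div ((hsx s x).cosh.pow 2)
      (pow_ne_zero 2 (coshne _))).const_mul (-(A * s))
  refine HasDerivAt.congr_deriv h (by simp only [Pi.pow_apply]; push_cast; ring)

private lemma hw1 (ν s x : ℝ) :
    HasDerivAt (fun x => 2 * ν * (1 / Real.cosh (s * x)) ^ 2)
      (-(4 * ν * s) * (Real.sinh (s * x) / Real.cosh (s * x) ^ 3)) x := by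
  have h := ((((hsx s x).cosh.pow 2).inv (pow_ne_zero 2 (coshne _)))).const_mul (2 * ν)
  refine HasDerivAt.congr_deriv (by simpa [one_div, inv_pow] using h) ?_
  field_simp
  ring

private lemma hw2 (ν s x : ℝ) :
    HasDerivAt (fun x => -(4 * ν * s) * (Real.sinh (s * x) / Real.cosh (s * x) ^ 3))
      (-(4 * ν * s) * ((Real.cosh (s * x) * s * Real.cosh (s * x) ^ 3
          - Real.sinh (s * x) * (3 * Real.cosh (s * x) ^ 2 * (Real.sinh (s * x) * s)))
        / (Real.cosh (s * x) ^ 3) ^ 2)) x := by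
  have h := (((hsx s x).sinh).div ((hsx s x).cosh.pow 3)
      (pow_ne_zero 3 (coshne _))).const_mul (-(4 * ν * s))
  refine HasDerivAt.congr_deriv h (by simp only [Pi.pow_apply]; push_cast; ring)

/-- For `ν > 0`, `c > 4ν`, `A² = 2ν(c − 4ν)`, the pair
`u(x) = A sech(√ν x)`, `w(x) = 2ν sech²(√ν x)` solves the steady
long-wave–short-wave resonance equations
`−2u'' − 2uw + 2νu = 0` and `−w'' + cw − 3w² − u² = 0`. -/
theorem stmt18 (ν c A : ℝ) (hν : 0 < ν) (hc : 4 * ν < c)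
    (hA : A ^ 2 = 2 * ν * (c - 4 * ν)) :
    (∀ x : ℝ,
      -2 * deriv (deriv (uLW ν A)) x - 2 * uLW ν A x * wLW ν x + 2 * ν * uLW ν A x
        = 0) ∧
    (∀ x : ℝ,
      -deriv (deriv (wLW ν)) x + c * wLW ν x - 3 * (wLW ν x) ^ 2 - (uLW ν A x) ^ 2
        = 0) := by
  set s := Real.sqrt ν with hs
  have hs2 : s ^ 2 = ν := Real.sq_sqrt hν.le
  have hueq : uLW ν A = fun x => A * (1 / Real.cosh (s * x)) := rfl
  have hweq : wLW ν = fun x => 2 * ν * (1 / Real.cosh (s * x)) ^ 2 := rfl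
  have hdu : deriv (uLW ν A)
      = fun x => -(A * s) * (Real.sinh (s * x) / Real.cosh (s * x) ^ 2) := by
    funext x; rw [hueq]; exact (hu1 A s x).deriv
  have hdw : deriv (wLW ν)
      = fun x => -(4 * ν * s) * (Real.sinh (s * x) / Real.cosh (s * x) ^ 3) := by
    funext x; rw [hweq]; exact (hw1 ν s x).deriv
  constructor
  · intro x
    have hddu : deriv (deriv (uLW ν A)) x
        = -(A * s) * ((Real.cosh (s * x) * s * Real.cosh (s * x) ^ 2
          - Real.sinh (s * x) * (2 * Real.cosh (s * x) * (Real.sinh (s * x) * s)))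
        / (Real.cosh (s * x) ^ 2) ^ 2) := by
      rw [hdu]; exact (hu2 A s x).deriv
    rw [hddu, hueq, hweq]
    have hsq : Real.sinh (s * x) ^ 2 = Real.cosh (s * x) ^ 2 - 1 := Real.sinh_sq (s * x)
    field_simp
    linear_combination (2 * A * Real.cosh (s*x) ^ 2
        - 4 * A * Real.sinh (s*x) ^ 2) * hs2
      - 4 * A * ν * hsq
  · intro x
    have hddw : deriv (deriv (wLW ν)) x
        = -(4 * ν * s) * ((Real.cosh (s * x) * s * Real.cosh (s * x) ^ 3
          - Real.sinh (s * x) * (3 * Real.cosh (s * x) ^ 2 * (Real.sinh (s * x) * s)))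
        / (Real.cosh (s * x) ^ 3) ^ 2) := by
      rw [hdw]; exact (hw2 ν s x).deriv
    rw [hddw, hueq, hweq]
    have hsq : Real.sinh (s * x) ^ 2 = Real.cosh (s * x) ^ 2 - 1 := Real.sinh_sq (s * x)
    field_simp
    linear_combination (4 * ν * Real.cosh (s*x) ^ 2
        - 12 * ν * Real.sinh (s*x) ^ 2) * hs2
      - 12 * ν ^ 2 * hsq - Real.cosh (s*x) ^ 2 * hA
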